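/- arXiv:1707.08650 — 3 statements merged into one kernel-verified Lean document; each statement's English description precedes it below -/
import Mathlib

section
/- Let n ≥ 1 and let ρ be a density matrix indexed by Fin n × Fin n. If there exists a density matrix σ indexed by Fin n × Fin n × Fin n × Fin n with Tr₂₄ σ = ρ, Tr₂₃ σ = ρ, Tr₁₄ σ = ρ and Tr₁₃ σ = ρ, then for all quantum channels Φ₁¹, Φ₂¹, Φ₁², Φ₂² : Matrix (Fin n) (Fin n) ℂ → Matrix (Fin n) (Fin n) ℂ there exists a density matrix σ̃ indexed by Fin n × Fin n × Fin n × Fin n with Tr₂₄ σ̃ = (Φ₁¹ ⊗ Φ₁²)(ρ), Tr₂₃ σ̃ = (Φ₁¹ ⊗ Φ₂²)(ρ), Tr₁₄ σ̃ = (Φ₂¹ ⊗ Φ₁²)(ρ) and Tr₁₃ σ̃ = (Φ₂¹ ⊗ Φ₂²)(ρ). (Thus a bipartite biconditional state can be Bell nonlocal only if the one built from four identity channels is Bell nonlocal.) -/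
open Matrix BigOperators
open scoped ComplexOrder

noncomputable section

/-- A density matrix: positive semidefinite with trace 1. -/
def IsDensity {ι : Type*} [Fintype ι] (M : Matrix ι ι ℂ) : Prop :=
  M.PosSemidef ∧ M.trace = 1

/-- The Choi matrix of a linear map between matrix spaces, indexed by (output × input). -/
def choi {ι κ : Type*} [Fintype ι] [DecidableEq ι]
    (Φ : Matrix ι ι ℂ →ₗ[ℂ] Matrix κ κ ℂ) : Matrix (κ × ι) (κ × ι) ℂ :=
  fun p q => Φ (Matrix.single p.2 q.2 1) p.1 q.1

/-- A quantum channel: trace preserving with positive semidefinite Choi matrix. -/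
def IsQChannel {ι κ : Type*} [Fintype ι] [DecidableEq ι] [Fintype κ]
    (Φ : Matrix ι ι ℂ →ₗ[ℂ] Matrix κ κ ℂ) : Prop :=
  (∀ X, (Φ X).trace = X.trace) ∧ (choi Φ).PosSemidef

/-- The tensor product `Φ ⊗ Ψ` of maps on matrix spaces, determined by
`(Φ ⊗ Ψ)(X ⊗ₖ Y) = (Φ X) ⊗ₖ (Ψ Y)`. -/
def tmap {α β γ δ : Type*} [Fintype α] [DecidableEq α] [Fintype γ] [DecidableEq γ]
    (Φ : Matrix α α ℂ → Matrix β β ℂ) (Ψ : Matrix γ γ ℂ → Matrix δ δ ℂ)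
    (M : Matrix (α × γ) (α × γ) ℂ) : Matrix (β × δ) (β × δ) ℂ :=
  fun p q => ∑ a, ∑ a', ∑ c, ∑ c', M (a, c) (a', c') *
    (Φ (Matrix.single a a' 1) p.1 q.1 * Ψ (Matrix.single c c' 1) p.2 q.2)

/-- Partial trace over the second factor of a bipartite matrix. -/
def ptr2 {α β : Type*} [Fintype β] (M : Matrix (α × β) (α × β) ℂ) : Matrix α α ℂ :=
  fun a a' => ∑ b, M (a, b) (a', b)

/-- Partial trace over the first factor of a bipartite matrix. -/
def ptr1 {α β : Type*} [Fintype α] (M : Matrix (α × β) (α × β) ℂ) : Matrix β β ℂ :=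
  fun b b' => ∑ a, M (a, b) (a, b')

/-- Compatibility of two quantum channels: they arise as the two marginals of a single
channel into the tensor product. -/
def Compatible {n : ℕ} (Φ₁ Φ₂ : Matrix (Fin n) (Fin n) ℂ →ₗ[ℂ] Matrix (Fin n) (Fin n) ℂ) : Prop :=
  ∃ Φ : Matrix (Fin n) (Fin n) ℂ →ₗ[ℂ] Matrix (Fin n × Fin n) (Fin n × Fin n) ℂ,
    IsQChannel Φ ∧ ∀ ρ : Matrix (Fin n) (Fin n) ℂ, IsDensity ρ →
      ptr2 (Φ ρ) = Φ₁ ρ ∧ ptr1 (Φ ρ) = Φ₂ ρ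

/-- Trace out factors 2 and 4 of a 4-partite matrix. -/
def tr24 {α β γ δ : Type*} [Fintype β] [Fintype δ]
    (M : Matrix (α × β × γ × δ) (α × β × γ × δ) ℂ) : Matrix (α × γ) (α × γ) ℂ :=
  fun p q => ∑ b, ∑ d, M (p.1, b, p.2, d) (q.1, b, q.2, d)

/-- Trace out factors 2 and 3 of a 4-partite matrix. -/
def tr23 {α β γ δ : Type*} [Fintype β] [Fintype γ]
    (M : Matrix (α × β × γ × δ) (α × β × γ × δ) ℂ) : Matrix (α × δ) (α × δ) ℂ :=
  fun p q => ∑ b, ∑ c, M (p.1, b, c, p.2) (q.1, b, c, q.2)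

/-- Trace out factors 1 and 4 of a 4-partite matrix. -/
def tr14 {α β γ δ : Type*} [Fintype α] [Fintype δ]
    (M : Matrix (α × β × γ × δ) (α × β × γ × δ) ℂ) : Matrix (β × γ) (β × γ) ℂ :=
  fun p q => ∑ a, ∑ d, M (a, p.1, p.2, d) (a, q.1, q.2, d)

/-- Trace out factors 1 and 3 of a 4-partite matrix. -/
def tr13 {α β γ δ : Type*} [Fintype α] [Fintype γ]
    (M : Matrix (α × β × γ × δ) (α × β × γ × δ) ℂ) : Matrix (β × δ) (β × δ) ℂ :=
  fun p q => ∑ a, ∑ c, M (a, p.1, c, p.2) (a, q.1, c, q.2)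

/-!
The witness is `σ' = (Φ₁¹ ⊗ Φ₂¹ ⊗ Φ₁² ⊗ Φ₂²)(σ)`. It is a density matrix because a tensor product
of channels is a channel (its Choi matrix is a Kronecker product of Choi matrices, up to
reordering the factors) and a map with positive semidefinite Choi matrix preserves positivity
(by the Schur product theorem). For the marginals, group the four factors into the two parties
`(1, 2)` and `(3, 4)`: each partial trace `Tr_{ij}` traces out one factor per party, a partial
trace commutes past the channel on the kept factor, and the trace-preserving channel on the
traced-out factor disappears. Hence `Tr_{ij} σ' = (Φ ⊗ Φ')(Tr_{ij} σ) = (Φ ⊗ Φ')(ρ)`.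
-/

open scoped Kronecker

section TensorMap

variable {α β γ δ : Type*} [Fintype α] [DecidableEq α] [Fintype γ] [DecidableEq γ]

lemma linearMap_apply_apply_eq_sum {ι κ : Type*} [Fintype ι] [DecidableEq ι]
    (F : Matrix ι ι ℂ →ₗ[ℂ] Matrix κ κ ℂ) (X : Matrix ι ι ℂ) (p q : κ) :
    F X p q = ∑ i, ∑ j, X i j * F (single i j 1) p q := by
  have hsingle : ∀ i j, single i j (X i j) = X i j • single i j 1 := by simp
  conv_lhs => rw [X.matrix_eq_sum_single]
  simp only [hsingle, map_sum, map_smul, Matrix.sum_apply, Matrix.smul_apply, smul_eq_mul]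

lemma tmap_eq_sum (Φ : Matrix α α ℂ → Matrix β β ℂ) (Ψ : Matrix γ γ ℂ → Matrix δ δ ℂ)
    (M : Matrix (α × γ) (α × γ) ℂ) :
    tmap Φ Ψ M = ∑ a, ∑ a', ∑ c, ∑ c', M (a, c) (a', c') •
      (Φ (single a a' 1) ⊗ₖ Ψ (single c c' 1)) := by
  ext p q
  simp [tmap, Matrix.sum_apply]

def tmapₗ (Φ : Matrix α α ℂ → Matrix β β ℂ) (Ψ : Matrix γ γ ℂ → Matrix δ δ ℂ) :
    Matrix (α × γ) (α × γ) ℂ →ₗ[ℂ] Matrix (β × δ) (β × δ) ℂ where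
  toFun := tmap Φ Ψ
  map_add' M N := by
    simp only [tmap_eq_sum, Matrix.add_apply, add_smul, Finset.sum_add_distrib]
  map_smul' r M := by
    simp only [tmap_eq_sum, Matrix.smul_apply, smul_eq_mul, mul_smul, Finset.smul_sum,
      RingHom.id_apply]

@[simp]
lemma coe_tmapₗ (Φ : Matrix α α ℂ → Matrix β β ℂ) (Ψ : Matrix γ γ ℂ → Matrix δ δ ℂ) :
    ⇑(tmapₗ Φ Ψ) = tmap Φ Ψ := rfl

lemma tmap_kronecker (F : Matrix α α ℂ →ₗ[ℂ] Matrix β β ℂ) (G : Matrix γ γ ℂ →ₗ[ℂ] Matrix δ δ ℂ)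
    (X : Matrix α α ℂ) (Y : Matrix γ γ ℂ) : tmap F G (X ⊗ₖ Y) = F X ⊗ₖ G Y := by
  ext p q
  simp only [tmap, kroneckerMap_apply, linearMap_apply_apply_eq_sum F X,
    linearMap_apply_apply_eq_sum G Y, Finset.sum_mul_sum]
  exact Finset.sum_congr rfl fun a _ => (Finset.sum_comm.trans <| Finset.sum_congr rfl
    fun c _ => Finset.sum_congr rfl fun a' _ => Finset.sum_congr rfl fun c' _ => by ring)

lemma tmap_tmap {β' δ' : Type*} [DecidableEq β] [Fintype β] [DecidableEq δ] [Fintype δ]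
    (F : Matrix β β ℂ →ₗ[ℂ] Matrix β' β' ℂ) (G : Matrix δ δ ℂ →ₗ[ℂ] Matrix δ' δ' ℂ)
    (Φ : Matrix α α ℂ → Matrix β β ℂ) (Ψ : Matrix γ γ ℂ → Matrix δ δ ℂ)
    (M : Matrix (α × γ) (α × γ) ℂ) :
    tmap F G (tmap Φ Ψ M) = tmap (F ∘ Φ) (G ∘ Ψ) M := by
  rw [← coe_tmapₗ, tmap_eq_sum Φ Ψ, tmap_eq_sum]
  simp [map_sum, map_smul, tmap_kronecker]

lemma tmap_tmap_comm {α' β' γ' δ' : Type*} [Fintype α'] [DecidableEq α'] [Fintype β]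
    [DecidableEq β] [Fintype γ'] [DecidableEq γ'] [Fintype δ] [DecidableEq δ]
    {F : Matrix β β ℂ →ₗ[ℂ] Matrix β' β' ℂ} {G : Matrix δ δ ℂ →ₗ[ℂ] Matrix δ' δ' ℂ}
    {Φ : Matrix α α ℂ → Matrix β β ℂ} {Ψ : Matrix γ γ ℂ → Matrix δ δ ℂ}
    {F' : Matrix α α ℂ → Matrix α' α' ℂ} {G' : Matrix γ γ ℂ → Matrix γ' γ' ℂ}
    {Φ' : Matrix α' α' ℂ →ₗ[ℂ] Matrix β' β' ℂ} {Ψ' : Matrix γ' γ' ℂ →ₗ[ℂ] Matrix δ' δ' ℂ}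
    (hF : ∀ X, F (Φ X) = Φ' (F' X)) (hG : ∀ Y, G (Ψ Y) = Ψ' (G' Y))
    (M : Matrix (α × γ) (α × γ) ℂ) :
    tmap F G (tmap Φ Ψ M) = tmap Φ' Ψ' (tmap F' G' M) := by
  rw [tmap_tmap, tmap_tmap]
  congr 1 <;> funext X <;> simp [hF, hG]

end TensorMap

section PartialTrace

variable {α β γ δ : Type*}

def ptr2ₗ [Fintype β] : Matrix (α × β) (α × β) ℂ →ₗ[ℂ] Matrix α α ℂ where
  toFun := ptr2
  map_add' M N := by ext; simp [ptr2, Finset.sum_add_distrib]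
  map_smul' r M := by ext; simp [ptr2, Finset.mul_sum]

def ptr1ₗ [Fintype α] : Matrix (α × β) (α × β) ℂ →ₗ[ℂ] Matrix β β ℂ where
  toFun := ptr1
  map_add' M N := by ext; simp [ptr1, Finset.sum_add_distrib]
  map_smul' r M := by ext; simp [ptr1, Finset.mul_sum]

@[simp]
lemma coe_ptr2ₗ [Fintype β] : ⇑(ptr2ₗ : Matrix (α × β) (α × β) ℂ →ₗ[ℂ] _) = ptr2 := rfl

@[simp]
lemma coe_ptr1ₗ [Fintype α] : ⇑(ptr1ₗ : Matrix (α × β) (α × β) ℂ →ₗ[ℂ] _) = ptr1 := rfl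

lemma ptr2_kronecker [Fintype β] (X : Matrix α α ℂ) (Y : Matrix β β ℂ) :
    ptr2 (X ⊗ₖ Y) = Y.trace • X := by
  ext; simp [ptr2, trace, Finset.mul_sum, mul_comm]

lemma ptr1_kronecker [Fintype α] (X : Matrix α α ℂ) (Y : Matrix β β ℂ) :
    ptr1 (X ⊗ₖ Y) = X.trace • Y := by
  ext; simp [ptr1, trace, Finset.sum_mul]

lemma trace_ptr2 [Fintype α] [Fintype β] (M : Matrix (α × β) (α × β) ℂ) :
    (ptr2 M).trace = M.trace := by
  simp [ptr2, trace, Fintype.sum_prod_type]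

end PartialTrace

section Marginals

variable {α β γ δ : Type*} [Fintype α] [DecidableEq α] [Fintype γ] [DecidableEq γ]

lemma tmap_id_id (M : Matrix (α × γ) (α × γ) ℂ) : tmap id id M = M := by
  ext ⟨a, c⟩ ⟨a', c'⟩
  simp [tmap, single_apply, ite_and]

lemma ptr2_tmap (Φ : Matrix α α ℂ →ₗ[ℂ] Matrix β β ℂ) {Ψ : Matrix γ γ ℂ → Matrix δ δ ℂ}
    [Fintype δ] (hΨ : ∀ X, (Ψ X).trace = X.trace) (M : Matrix (α × γ) (α × γ) ℂ) :
    ptr2 (tmap Φ Ψ M) = Φ (ptr2 M) := by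
  conv_rhs => rw [← tmap_id_id M]
  simp only [tmap_eq_sum, ← coe_ptr2ₗ, map_sum, map_smul]
  simp only [coe_ptr2ₗ, ptr2_kronecker, hΨ, id, map_smul]

lemma ptr1_tmap {Φ : Matrix α α ℂ → Matrix β β ℂ} (Ψ : Matrix γ γ ℂ →ₗ[ℂ] Matrix δ δ ℂ)
    [Fintype β] (hΦ : ∀ X, (Φ X).trace = X.trace) (M : Matrix (α × γ) (α × γ) ℂ) :
    ptr1 (tmap Φ Ψ M) = Ψ (ptr1 M) := by
  conv_rhs => rw [← tmap_id_id M]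
  simp only [tmap_eq_sum, ← coe_ptr1ₗ, map_sum, map_smul]
  simp only [coe_ptr1ₗ, ptr1_kronecker, hΦ, id, map_smul]

lemma trace_tmap (Φ : Matrix α α ℂ →ₗ[ℂ] Matrix β β ℂ) {Ψ : Matrix γ γ ℂ → Matrix δ δ ℂ}
    [Fintype β] [Fintype δ] (hΦ : ∀ X, (Φ X).trace = X.trace)
    (hΨ : ∀ X, (Ψ X).trace = X.trace) (M : Matrix (α × γ) (α × γ) ℂ) :
    (tmap Φ Ψ M).trace = M.trace := by
  rw [← trace_ptr2, ptr2_tmap Φ hΨ, hΦ, trace_ptr2]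

end Marginals

section Channels

variable {ι κ : Type*} [Fintype ι] [DecidableEq ι] [Fintype κ]

lemma posSemidef_map_of_posSemidef_choi {Φ : Matrix ι ι ℂ →ₗ[ℂ] Matrix κ κ ℂ}
    (hΦ : (choi Φ).PosSemidef) {M : Matrix ι ι ℂ} (hM : M.PosSemidef) : (Φ M).PosSemidef := by
  classical
  let V : Matrix (κ × ι) κ ℂ := of fun x p => if x.1 = p then 1 else 0
  have hJM := (posSemidef_vecMulVec_self_star fun _ : κ => (1 : ℂ)).kronecker hM
  have key : Φ M = Vᴴ * (choi Φ ⊙ (vecMulVec (fun _ => 1) (star fun _ => 1) ⊗ₖ M)) * V := by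
    ext p q
    rw [linearMap_apply_apply_eq_sum Φ]
    simp only [V, mul_apply, conjTranspose_apply, of_apply, RCLike.star_def,
      MonoidWithZeroHom.map_ite_one_zero, hadamard_apply, choi, kroneckerMap_apply,
      vecMulVec_apply, Pi.star_apply, star_one, mul_one, one_mul, ite_mul, zero_mul, mul_ite,
      mul_zero, Fintype.sum_prod_type, Finset.sum_ite_irrel, Finset.sum_const_zero,
      Finset.sum_ite_eq', Finset.mem_univ, if_true]
    rw [Finset.sum_comm]
    simp only [mul_comm]
  rw [key]
  exact (hΦ.hadamard hJM).conjTranspose_mul_mul_same V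

lemma IsQChannel.isDensity_map {Φ : Matrix ι ι ℂ →ₗ[ℂ] Matrix κ κ ℂ} (hΦ : IsQChannel Φ)
    {M : Matrix ι ι ℂ} (hM : IsDensity M) : IsDensity (Φ M) :=
  ⟨posSemidef_map_of_posSemidef_choi hΦ.2 hM.1, (hΦ.1 M).trans hM.2⟩

lemma choi_tmapₗ {α β γ δ : Type*} [Fintype α] [DecidableEq α] [Fintype γ] [DecidableEq γ]
    (Φ : Matrix α α ℂ →ₗ[ℂ] Matrix β β ℂ) (Ψ : Matrix γ γ ℂ →ₗ[ℂ] Matrix δ δ ℂ) :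
    choi (tmapₗ Φ Ψ) = (choi Φ ⊗ₖ choi Ψ).submatrix (Equiv.prodProdProdComm β δ α γ)
      (Equiv.prodProdProdComm β δ α γ) := by
  ext ⟨⟨b, d⟩, a, c⟩ ⟨⟨b', d'⟩, a', c'⟩
  rw [choi, coe_tmapₗ, ← mul_one (1 : ℂ), ← single_kronecker_single, tmap_kronecker]
  rfl

lemma IsQChannel.tmapₗ {α β γ δ : Type*} [Fintype α] [DecidableEq α] [Fintype β]
    [Fintype γ] [DecidableEq γ] [Fintype δ]
    {Φ : Matrix α α ℂ →ₗ[ℂ] Matrix β β ℂ} {Ψ : Matrix γ γ ℂ →ₗ[ℂ] Matrix δ δ ℂ}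
    (hΦ : IsQChannel Φ) (hΨ : IsQChannel Ψ) : IsQChannel (tmapₗ Φ Ψ) :=
  ⟨trace_tmap Φ hΦ.1 hΨ.1, choi_tmapₗ Φ Ψ ▸ (hΦ.2.kronecker hΨ.2).submatrix _⟩

end Channels

section FourParty

variable {α β γ δ : Type*} [Fintype α] [DecidableEq α] [Fintype β] [DecidableEq β]
  [Fintype γ] [DecidableEq γ] [Fintype δ] [DecidableEq δ]

lemma tr24_eq_tmap (M : Matrix (α × β × γ × δ) (α × β × γ × δ) ℂ) :
    tr24 M = tmap ptr2ₗ ptr2ₗ (M.submatrix (Equiv.prodAssoc α β (γ × δ))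
      (Equiv.prodAssoc α β (γ × δ))) := by
  ext ⟨a, c⟩ ⟨a', c'⟩
  simp [tmap, tr24, ptr2, single_apply, Fintype.sum_prod_type, ite_and]

lemma tr23_eq_tmap (M : Matrix (α × β × γ × δ) (α × β × γ × δ) ℂ) :
    tr23 M = tmap ptr2ₗ ptr1ₗ (M.submatrix (Equiv.prodAssoc α β (γ × δ))
      (Equiv.prodAssoc α β (γ × δ))) := by
  ext ⟨a, d⟩ ⟨a', d'⟩
  simp [tmap, tr23, ptr2, ptr1, single_apply, Fintype.sum_prod_type, ite_and]

lemma tr14_eq_tmap (M : Matrix (α × β × γ × δ) (α × β × γ × δ) ℂ) :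
    tr14 M = tmap ptr1ₗ ptr2ₗ (M.submatrix (Equiv.prodAssoc α β (γ × δ))
      (Equiv.prodAssoc α β (γ × δ))) := by
  ext ⟨b, c⟩ ⟨b', c'⟩
  simp [tmap, tr14, ptr2, ptr1, single_apply, Fintype.sum_prod_type, ite_and]

lemma tr13_eq_tmap (M : Matrix (α × β × γ × δ) (α × β × γ × δ) ℂ) :
    tr13 M = tmap ptr1ₗ ptr1ₗ (M.submatrix (Equiv.prodAssoc α β (γ × δ))
      (Equiv.prodAssoc α β (γ × δ))) := by
  ext ⟨b, d⟩ ⟨b', d'⟩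
  simp [tmap, tr13, ptr1, single_apply, Fintype.sum_prod_type, ite_and]

end FourParty

lemma IsDensity.submatrix_equiv {ι ι' : Type*} [Fintype ι] [Fintype ι'] {M : Matrix ι ι ℂ}
    (hM : IsDensity M) (e : ι' ≃ ι) : IsDensity (M.submatrix e e) :=
  ⟨hM.1.submatrix e, (e.sum_comp fun i => M i i).trans hM.2⟩

theorem bell_local_of_id_general {n : ℕ}
    (ρ : Matrix (Fin n × Fin n) (Fin n × Fin n) ℂ)
    (σ : Matrix (Fin n × Fin n × Fin n × Fin n) (Fin n × Fin n × Fin n × Fin n) ℂ)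
    (hσ : IsDensity σ)
    (h24 : tr24 σ = ρ) (h23 : tr23 σ = ρ) (h14 : tr14 σ = ρ) (h13 : tr13 σ = ρ)
    (Φ₁₁ Φ₂₁ Φ₁₂ Φ₂₂ : Matrix (Fin n) (Fin n) ℂ →ₗ[ℂ] Matrix (Fin n) (Fin n) ℂ)
    (hΦ₁₁ : IsQChannel Φ₁₁) (hΦ₂₁ : IsQChannel Φ₂₁)
    (hΦ₁₂ : IsQChannel Φ₁₂) (hΦ₂₂ : IsQChannel Φ₂₂) :
    ∃ σ' : Matrix (Fin n × Fin n × Fin n × Fin n) (Fin n × Fin n × Fin n × Fin n) ℂ,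
      IsDensity σ' ∧
      tr24 σ' = tmap (⇑Φ₁₁) (⇑Φ₁₂) ρ ∧
      tr23 σ' = tmap (⇑Φ₁₁) (⇑Φ₂₂) ρ ∧
      tr14 σ' = tmap (⇑Φ₂₁) (⇑Φ₁₂) ρ ∧
      tr13 σ' = tmap (⇑Φ₂₁) (⇑Φ₂₂) ρ := by
  let e := Equiv.prodAssoc (Fin n) (Fin n) (Fin n × Fin n)
  let Φ := tmapₗ (tmapₗ Φ₁₁ Φ₂₁) (tmapₗ Φ₁₂ Φ₂₂)
  have hΦ : IsQChannel Φ := (hΦ₁₁.tmapₗ hΦ₂₁).tmapₗ (hΦ₁₂.tmapₗ hΦ₂₂)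
  let σ' := (Φ (σ.submatrix e e)).submatrix e.symm e.symm
  have hσ' : σ'.submatrix e e = Φ (σ.submatrix e e) := by
    simp [σ', submatrix_submatrix]
  refine ⟨σ', (hΦ.isDensity_map (hσ.submatrix_equiv e)).submatrix_equiv e.symm, ?_, ?_, ?_, ?_⟩
  · rw [tr24_eq_tmap, hσ', ← h24, tr24_eq_tmap]
    exact tmap_tmap_comm (ptr2_tmap Φ₁₁ hΦ₂₁.1) (ptr2_tmap Φ₁₂ hΦ₂₂.1) _
  · rw [tr23_eq_tmap, hσ', ← h23, tr23_eq_tmap]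
    exact tmap_tmap_comm (ptr2_tmap Φ₁₁ hΦ₂₁.1) (ptr1_tmap Φ₂₂ hΦ₁₂.1) _
  · rw [tr14_eq_tmap, hσ', ← h14, tr14_eq_tmap]
    exact tmap_tmap_comm (ptr1_tmap Φ₂₁ hΦ₁₁.1) (ptr2_tmap Φ₁₂ hΦ₂₂.1) _
  · rw [tr13_eq_tmap, hσ', ← h13, tr13_eq_tmap]
    exact tmap_tmap_comm (ptr1_tmap Φ₂₁ hΦ₁₁.1) (ptr1_tmap Φ₂₂ hΦ₁₂.1) _

/-- if the bipartite biconditional state built from four identity channels is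
Bell local, then the one built from any four quantum channels is Bell local. -/
theorem bell_local_of_id {n : ℕ} (hn : 1 ≤ n)
    (ρ : Matrix (Fin n × Fin n) (Fin n × Fin n) ℂ) (hρ : IsDensity ρ)
    (σ : Matrix (Fin n × Fin n × Fin n × Fin n) (Fin n × Fin n × Fin n × Fin n) ℂ)
    (hσ : IsDensity σ)
    (h24 : tr24 σ = ρ) (h23 : tr23 σ = ρ) (h14 : tr14 σ = ρ) (h13 : tr13 σ = ρ)
    (Φ₁₁ Φ₂₁ Φ₁₂ Φ₂₂ : Matrix (Fin n) (Fin n) ℂ →ₗ[ℂ] Matrix (Fin n) (Fin n) ℂ)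
    (hΦ₁₁ : IsQChannel Φ₁₁) (hΦ₂₁ : IsQChannel Φ₂₁)
    (hΦ₁₂ : IsQChannel Φ₁₂) (hΦ₂₂ : IsQChannel Φ₂₂) :
    ∃ σ' : Matrix (Fin n × Fin n × Fin n × Fin n) (Fin n × Fin n × Fin n × Fin n) ℂ,
      IsDensity σ' ∧
      tr24 σ' = tmap (⇑Φ₁₁) (⇑Φ₁₂) ρ ∧
      tr23 σ' = tmap (⇑Φ₁₁) (⇑Φ₂₂) ρ ∧
      tr14 σ' = tmap (⇑Φ₂₁) (⇑Φ₁₂) ρ ∧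
      tr13 σ' = tmap (⇑Φ₂₁) (⇑Φ₂₂) ρ :=
  bell_local_of_id_general ρ σ hσ h24 h23 h14 h13 Φ₁₁ Φ₂₁ Φ₁₂ Φ₂₂ hΦ₁₁ hΦ₂₁ hΦ₁₂ hΦ₂₂

end
end

section
/- For every density matrix ρ indexed by Fin 2 × Fin 2 and all quantum channels Φ₁¹, Φ₂¹, Φ₁², Φ₂² : Matrix (Fin 2) (Fin 2) ℂ → Matrix (Fin 2) (Fin 2) ℂ, the CHSH quantity satisfies the Tsirelson bound X_ρ ≤ 2√2, where E(Φ, Ψ) = Re Tr((Φ ⊗ Ψ)(ρ) · A) with A the diagonal matrix on Fin 2 × Fin 2 with entries A (a,b) (a,b) = (−1)^(a+b), and X_ρ = E(Φ₁¹, Φ₁²) + E(Φ₁¹, Φ₂²) + E(Φ₂¹, Φ₁²) − E(Φ₂¹, Φ₂²). -/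
/-!
In the Heisenberg picture `E(Φ, Ψ) = Re Tr(ρ (Φ†Z ⊗ Ψ†Z))`, where `Z = diag(1, -1)` and
`Tr(Φ(X) Y) = Tr(X Φ†(Y))`. The dual of a channel is positive (because its Choi matrix is) and
unital (because `Φ` preserves the trace), so `-1 ≤ Φ†Z ≤ 1` and hence `(Φ†Z)² ≤ 1`. The bound is
then Tsirelson's operator inequality for the Hermitian contractions `Φᵢ¹†Z ⊗ 1` and `1 ⊗ Φⱼ²†Z`,
which commute across the tensor factors, evaluated in the state `ρ`.
-/

open Matrix BigOperators
open scoped ComplexOrder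

noncomputable section

/-- The CHSH observable `A = |00⟩⟨00| − |01⟩⟨01| − |10⟩⟨10| + |11⟩⟨11|`. -/
def chshA : Matrix (Fin 2 × Fin 2) (Fin 2 × Fin 2) ℂ :=
  fun p q => if p = q then ((-1 : ℂ)) ^ ((p.1 : ℕ) + (p.2 : ℕ)) else 0

/-- The correlation `E(Φ, Ψ) = Re Tr((Φ ⊗ Ψ)(ρ) · A)`. -/
def corr (ρ : Matrix (Fin 2 × Fin 2) (Fin 2 × Fin 2) ℂ)
    (Φ Ψ : Matrix (Fin 2) (Fin 2) ℂ →ₗ[ℂ] Matrix (Fin 2) (Fin 2) ℂ) : ℝ :=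
  ((tmap (⇑Φ) (⇑Ψ) ρ * chshA).trace).re

/-- The CHSH quantity `X_ρ`. -/
def chshX (ρ : Matrix (Fin 2 × Fin 2) (Fin 2 × Fin 2) ℂ)
    (Φ₁₁ Φ₂₁ Φ₁₂ Φ₂₂ : Matrix (Fin 2) (Fin 2) ℂ →ₗ[ℂ] Matrix (Fin 2) (Fin 2) ℂ) : ℝ :=
  corr ρ Φ₁₁ Φ₁₂ + corr ρ Φ₁₁ Φ₂₂ + corr ρ Φ₂₁ Φ₁₂ - corr ρ Φ₂₁ Φ₂₂

open scoped Kronecker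

namespace Matrix

theorem sub_kronecker {R l m n p : Type*} [Ring R] (A B : Matrix l m R) (C : Matrix n p R) :
    (A - B) ⊗ₖ C = A ⊗ₖ C - B ⊗ₖ C := by
  ext; simp [sub_mul]

theorem kronecker_sub {R l m n p : Type*} [Ring R] (A : Matrix l m R) (B C : Matrix n p R) :
    A ⊗ₖ (B - C) = A ⊗ₖ B - A ⊗ₖ C := by
  ext; simp [mul_sub]

variable {m n : Type*} [Fintype m] [DecidableEq m] [Fintype n] [DecidableEq n]

open scoped MatrixOrder in
theorem PosSemidef.trace_mul_nonneg {A B : Matrix m m ℂ} (hA : A.PosSemidef) (hB : B.PosSemidef) :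
    0 ≤ (A * B).trace := by
  obtain ⟨S, rfl⟩ := CStarAlgebra.nonneg_iff_eq_star_mul_self.mp hA.nonneg
  rw [star_eq_conjTranspose, Matrix.mul_assoc, trace_mul_comm]
  exact (hB.mul_mul_conjTranspose_same S).trace_nonneg

/-- `1 - A² = ((1 - A)(1 + A)(1 - A) + (1 + A)(1 - A)(1 + A)) / 2`. -/
theorem PosSemidef.one_sub_mul_self {A : Matrix m m ℂ} (h₁ : (1 - A).PosSemidef)
    (h₂ : (1 + A).PosSemidef) : (1 - A * A).PosSemidef := by
  have key : 1 - A * A = (2⁻¹ : ℝ) •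
      ((1 - A)ᴴ * (1 + A) * (1 - A) + (1 + A)ᴴ * (1 - A) * (1 + A)) := by
    rw [h₁.isHermitian.eq, h₂.isHermitian.eq]
    simp only [Matrix.mul_add, Matrix.add_mul, Matrix.mul_sub, Matrix.sub_mul, Matrix.mul_one,
      Matrix.one_mul]
    module
  rw [key]
  exact ((h₂.conjTranspose_mul_mul_same _).add (h₁.conjTranspose_mul_mul_same _)).smul
    (by norm_num)

/-- With `P = a₁ - (b₁ + b₂)/√2` and `Q = a₂ - (b₁ - b₂)/√2`, the matrix in question equals
`(Σₓ (1 - x²) + P² + Q²)/√2`, `x` ranging over `a₁, a₂, b₁, b₂`. -/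
theorem posSemidef_chsh_of_commute {a₁ a₂ b₁ b₂ : Matrix m m ℂ}
    (ha₁ : a₁.IsHermitian) (ha₂ : a₂.IsHermitian) (hb₁ : b₁.IsHermitian) (hb₂ : b₂.IsHermitian)
    (h₁₁ : Commute a₁ b₁) (h₁₂ : Commute a₁ b₂) (h₂₁ : Commute a₂ b₁) (h₂₂ : Commute a₂ b₂)
    (ha₁' : (1 - a₁ * a₁).PosSemidef) (ha₂' : (1 - a₂ * a₂).PosSemidef)
    (hb₁' : (1 - b₁ * b₁).PosSemidef) (hb₂' : (1 - b₂ * b₂).PosSemidef) :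
    ((2 * √2 : ℝ) • 1 - (a₁ * b₁ + a₁ * b₂ + a₂ * b₁ - a₂ * b₂)).PosSemidef := by
  have h4s : 4 * (√2)⁻¹ = 2 * √2 := by field_simp; norm_num
  set s : ℝ := (√2)⁻¹
  have hs : s * s = 2⁻¹ := by rw [← mul_inv, Real.mul_self_sqrt zero_le_two]
  set P := a₁ - s • (b₁ + b₂)
  set Q := a₂ - s • (b₁ - b₂)
  have hP : Pᴴ = P := by simp [P, ha₁.eq, hb₁.eq, hb₂.eq]
  have hQ : Qᴴ = Q := by simp [Q, ha₂.eq, hb₁.eq, hb₂.eq]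
  have key : (2 * √2 : ℝ) • 1 - (a₁ * b₁ + a₁ * b₂ + a₂ * b₁ - a₂ * b₂) = s •
      ((1 - a₁ * a₁) + (1 - a₂ * a₂) + (1 - b₁ * b₁) + (1 - b₂ * b₂) + Pᴴ * P + Qᴴ * Q) := by
    rw [hP, hQ, ← h4s]
    simp only [P, Q, Matrix.mul_add, Matrix.add_mul, Matrix.mul_sub, Matrix.sub_mul,
      Matrix.mul_smul, Matrix.smul_mul, smul_smul, hs, h₁₁.eq, h₁₂.eq, h₂₁.eq, h₂₂.eq, smul_add,
      smul_sub]
    module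
  rw [key]
  exact (((((ha₁'.add ha₂').add hb₁').add hb₂').add (posSemidef_conjTranspose_mul_self P)).add
    (posSemidef_conjTranspose_mul_self Q)).smul (by positivity)

theorem posSemidef_chsh_kronecker {a₁ a₂ : Matrix m m ℂ} {b₁ b₂ : Matrix n n ℂ}
    (ha₁ : a₁.IsHermitian) (ha₂ : a₂.IsHermitian) (hb₁ : b₁.IsHermitian) (hb₂ : b₂.IsHermitian)
    (ha₁' : (1 - a₁ * a₁).PosSemidef) (ha₂' : (1 - a₂ * a₂).PosSemidef)
    (hb₁' : (1 - b₁ * b₁).PosSemidef) (hb₂' : (1 - b₂ * b₂).PosSemidef) :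
    ((2 * √2 : ℝ) • 1 - (a₁ ⊗ₖ b₁ + a₁ ⊗ₖ b₂ + a₂ ⊗ₖ b₁ - a₂ ⊗ₖ b₂)).PosSemidef := by
  have hmul (a : Matrix m m ℂ) (b : Matrix n n ℂ) : (a ⊗ₖ 1) * (1 ⊗ₖ b) = a ⊗ₖ b := by
    rw [← mul_kronecker_mul, Matrix.mul_one, Matrix.one_mul]
  have hcomm (a : Matrix m m ℂ) (b : Matrix n n ℂ) : Commute (a ⊗ₖ 1) (1 ⊗ₖ b) := by
    rw [Commute, SemiconjBy, hmul, ← mul_kronecker_mul, Matrix.mul_one, Matrix.one_mul]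
  have hleft {a : Matrix m m ℂ} (ha : a.IsHermitian) (ha' : (1 - a * a).PosSemidef) :
      (a ⊗ₖ (1 : Matrix n n ℂ)).IsHermitian ∧
        (1 - (a ⊗ₖ 1) * (a ⊗ₖ (1 : Matrix n n ℂ))).PosSemidef := by
    refine ⟨by simp [IsHermitian, conjTranspose_kronecker, ha.eq], ?_⟩
    rw [← mul_kronecker_mul, Matrix.one_mul, ← one_kronecker_one, ← sub_kronecker]
    exact ha'.kronecker PosSemidef.one
  have hright {b : Matrix n n ℂ} (hb : b.IsHermitian) (hb' : (1 - b * b).PosSemidef) :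
      ((1 : Matrix m m ℂ) ⊗ₖ b).IsHermitian ∧
        (1 - ((1 : Matrix m m ℂ) ⊗ₖ b) * (1 ⊗ₖ b)).PosSemidef := by
    refine ⟨by simp [IsHermitian, conjTranspose_kronecker, hb.eq], ?_⟩
    rw [← mul_kronecker_mul, Matrix.one_mul, ← one_kronecker_one, ← kronecker_sub]
    exact PosSemidef.one.kronecker hb'
  simpa only [hmul] using posSemidef_chsh_of_commute (hleft ha₁ ha₁').1 (hleft ha₂ ha₂').1
    (hright hb₁ hb₁').1 (hright hb₂ hb₂').1 (hcomm _ _) (hcomm _ _) (hcomm _ _) (hcomm _ _)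
    (hleft ha₁ ha₁').2 (hleft ha₂ ha₂').2 (hright hb₁ hb₁').2 (hright hb₂ hb₂').2

end Matrix

section Heisenberg

variable {ι κ : Type*} [Fintype ι] [DecidableEq ι] [Fintype κ]

def heisenbergDual (Φ : Matrix ι ι ℂ →ₗ[ℂ] Matrix κ κ ℂ) : Matrix κ κ ℂ →ₗ[ℂ] Matrix ι ι ℂ where
  toFun Y := of fun i j => (Φ (single j i 1) * Y).trace
  map_add' Y Y' := by ext; simp [Matrix.mul_add]
  map_smul' c Y := by ext; simp

omit [Fintype ι] in
theorem heisenbergDual_apply (Φ : Matrix ι ι ℂ →ₗ[ℂ] Matrix κ κ ℂ) (Y : Matrix κ κ ℂ) (i j : ι) :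
    heisenbergDual Φ Y i j = (Φ (single j i 1) * Y).trace := rfl

omit [Fintype κ] in
theorem map_eq_sum_single (Φ : Matrix ι ι ℂ →ₗ[ℂ] Matrix κ κ ℂ) (X : Matrix ι ι ℂ) :
    Φ X = ∑ i, ∑ j, X i j • Φ (single i j 1) := by
  conv_lhs => rw [matrix_eq_sum_single X]
  simp only [map_sum, ← map_smul, smul_single, smul_eq_mul, mul_one]

theorem trace_map_mul (Φ : Matrix ι ι ℂ →ₗ[ℂ] Matrix κ κ ℂ) (X : Matrix ι ι ℂ)
    (Y : Matrix κ κ ℂ) : (Φ X * Y).trace = (X * heisenbergDual Φ Y).trace := by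
  rw [map_eq_sum_single Φ X]
  simp only [Finset.sum_mul, trace_sum, smul_mul, trace_smul, smul_eq_mul]
  simp [trace, mul_apply, heisenbergDual_apply]

theorem heisenbergDual_one [DecidableEq κ] {Φ : Matrix ι ι ℂ →ₗ[ℂ] Matrix κ κ ℂ}
    (hΦ : ∀ X, (Φ X).trace = X.trace) : heisenbergDual Φ 1 = 1 := by
  ext i j
  rw [heisenbergDual_apply, Matrix.mul_one, hΦ, one_apply]
  split_ifs with h <;> simp [h, Ne.symm]

omit [Fintype κ] in
theorem conjTranspose_map_single {Φ : Matrix ι ι ℂ →ₗ[ℂ] Matrix κ κ ℂ}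
    (hΦ : (choi Φ).IsHermitian) (i j : ι) : (Φ (single i j 1))ᴴ = Φ (single j i 1) := by
  ext p q
  exact congr_fun₂ hΦ (p, j) (q, i)

theorem isHermitian_heisenbergDual {Φ : Matrix ι ι ℂ →ₗ[ℂ] Matrix κ κ ℂ}
    (hΦ : (choi Φ).IsHermitian) {Y : Matrix κ κ ℂ} (hY : Y.IsHermitian) :
    (heisenbergDual Φ Y).IsHermitian := by
  ext i j
  rw [conjTranspose_apply, heisenbergDual_apply, heisenbergDual_apply, ← trace_conjTranspose,
    conjTranspose_mul, hY.eq, conjTranspose_map_single hΦ]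
  exact trace_mul_comm _ _

theorem posSemidef_map_vecMulVec [DecidableEq κ] {Φ : Matrix ι ι ℂ →ₗ[ℂ] Matrix κ κ ℂ}
    (hΦ : (choi Φ).PosSemidef) (v : ι → ℂ) : (Φ (vecMulVec v (star v))).PosSemidef := by
  let V : Matrix (κ × ι) κ ℂ := of fun x q => if x.1 = q then star (v x.2) else 0
  have h : Φ (vecMulVec v (star v)) = Vᴴ * choi Φ * V := by
    ext p q
    rw [map_eq_sum_single Φ, Finset.sum_comm]
    simp [V, Matrix.sum_apply, Matrix.mul_apply, Fintype.sum_prod_type, choi, vecMulVec_apply,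
      Finset.sum_mul, apply_ite (starRingEnd ℂ), ite_mul, mul_right_comm]
  rw [h]
  exact hΦ.conjTranspose_mul_mul_same V

theorem posSemidef_heisenbergDual [DecidableEq κ] {Φ : Matrix ι ι ℂ →ₗ[ℂ] Matrix κ κ ℂ}
    (hΦ : (choi Φ).PosSemidef) {Y : Matrix κ κ ℂ} (hY : Y.PosSemidef) :
    (heisenbergDual Φ Y).PosSemidef := by
  refine .of_dotProduct_mulVec_nonneg (isHermitian_heisenbergDual hΦ.isHermitian hY.isHermitian)
    fun v => ?_
  rw [dotProduct_mulVec, dotProduct_comm, ← trace_vecMulVec, ← vecMulVec_mul, ← trace_map_mul]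
  exact (posSemidef_map_vecMulVec hΦ v).trace_mul_nonneg hY

theorem IsQChannel.one_sub_heisenbergDual_mul_self [DecidableEq κ]
    {Φ : Matrix ι ι ℂ →ₗ[ℂ] Matrix κ κ ℂ} (hΦ : IsQChannel Φ) {Y : Matrix κ κ ℂ}
    (h₁ : (1 - Y).PosSemidef) (h₂ : (1 + Y).PosSemidef) :
    (1 - heisenbergDual Φ Y * heisenbergDual Φ Y).PosSemidef := by
  refine .one_sub_mul_self ?_ ?_
  · simpa only [map_sub, heisenbergDual_one hΦ.1] using posSemidef_heisenbergDual hΦ.2 h₁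
  · simpa only [map_add, heisenbergDual_one hΦ.1] using posSemidef_heisenbergDual hΦ.2 h₂

omit [Fintype κ] in
theorem tmap_eq_sum_s18 {ι' κ' : Type*} [Fintype ι'] [DecidableEq ι']
    (Φ : Matrix ι ι ℂ → Matrix κ κ ℂ) (Ψ : Matrix ι' ι' ℂ → Matrix κ' κ' ℂ)
    (ρ : Matrix (ι × ι') (ι × ι') ℂ) :
    tmap Φ Ψ ρ =
      ∑ a, ∑ a', ∑ c, ∑ c', ρ (a, c) (a', c') • (Φ (single a a' 1) ⊗ₖ Ψ (single c c' 1)) := by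
  ext p q
  simp [tmap, Matrix.sum_apply]

theorem trace_tmap_mul_kronecker {ι' κ' : Type*} [Fintype ι'] [DecidableEq ι'] [Fintype κ']
    (Φ : Matrix ι ι ℂ →ₗ[ℂ] Matrix κ κ ℂ) (Ψ : Matrix ι' ι' ℂ →ₗ[ℂ] Matrix κ' κ' ℂ)
    (ρ : Matrix (ι × ι') (ι × ι') ℂ) (Y : Matrix κ κ ℂ) (W : Matrix κ' κ' ℂ) :
    (tmap Φ Ψ ρ * (Y ⊗ₖ W)).trace = (ρ * (heisenbergDual Φ Y ⊗ₖ heisenbergDual Ψ W)).trace := by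
  simp only [tmap_eq_sum_s18, Finset.sum_mul, trace_sum, smul_mul, trace_smul, ← mul_kronecker_mul,
    trace_kronecker, smul_eq_mul, ← heisenbergDual_apply]
  simp only [trace, diag, mul_apply, kroneckerMap_apply, Fintype.sum_prod_type]
  exact Finset.sum_congr rfl fun _ _ => Finset.sum_comm

end Heisenberg

def pauliZ : Matrix (Fin 2) (Fin 2) ℂ := diagonal ![1, -1]

theorem chshA_eq_kronecker : chshA = pauliZ ⊗ₖ pauliZ := by
  ext ⟨a, b⟩ ⟨c, d⟩
  fin_cases a <;> fin_cases b <;> fin_cases c <;> fin_cases d <;> simp [chshA, pauliZ]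

theorem isHermitian_pauliZ : pauliZ.IsHermitian := by
  rw [pauliZ, isHermitian_diagonal_iff]
  intro i; fin_cases i <;> simp [IsSelfAdjoint]

theorem posSemidef_one_sub_pauliZ : (1 - pauliZ).PosSemidef := by
  rw [pauliZ, ← diagonal_one, diagonal_sub, posSemidef_diagonal_iff]
  intro i; fin_cases i <;> norm_num

theorem posSemidef_one_add_pauliZ : (1 + pauliZ).PosSemidef := by
  rw [pauliZ, ← diagonal_one, diagonal_add, posSemidef_diagonal_iff]
  intro i; fin_cases i <;> norm_num

theorem corr_eq_re_trace (ρ : Matrix (Fin 2 × Fin 2) (Fin 2 × Fin 2) ℂ)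
    (Φ Ψ : Matrix (Fin 2) (Fin 2) ℂ →ₗ[ℂ] Matrix (Fin 2) (Fin 2) ℂ) :
    corr ρ Φ Ψ = (ρ * (heisenbergDual Φ pauliZ ⊗ₖ heisenbergDual Ψ pauliZ)).trace.re := by
  rw [corr, chshA_eq_kronecker, trace_tmap_mul_kronecker]

theorem IsDensity.re_trace_mul_le {ι : Type*} [Fintype ι] [DecidableEq ι]
    {ρ C : Matrix ι ι ℂ} (hρ : IsDensity ρ) {c : ℝ} (hC : (c • 1 - C).PosSemidef) :
    (ρ * C).trace.re ≤ c := by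
  have h := hρ.1.trace_mul_nonneg hC
  rw [Matrix.mul_sub, trace_sub, Matrix.mul_smul, Matrix.mul_one, trace_smul, hρ.2] at h
  simpa using (Complex.le_def.mp h).1

/-- the Tsirelson bound `X_ρ ≤ 2√2` for the CHSH quantity of quantum channels. -/
theorem chsh_tsirelson
    (ρ : Matrix (Fin 2 × Fin 2) (Fin 2 × Fin 2) ℂ) (hρ : IsDensity ρ)
    (Φ₁₁ Φ₂₁ Φ₁₂ Φ₂₂ : Matrix (Fin 2) (Fin 2) ℂ →ₗ[ℂ] Matrix (Fin 2) (Fin 2) ℂ)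
    (hΦ₁₁ : IsQChannel Φ₁₁) (hΦ₂₁ : IsQChannel Φ₂₁)
    (hΦ₁₂ : IsQChannel Φ₁₂) (hΦ₂₂ : IsQChannel Φ₂₂) :
    chshX ρ Φ₁₁ Φ₂₁ Φ₁₂ Φ₂₂ ≤ 2 * Real.sqrt 2 := by
  have hHerm {Φ : Matrix (Fin 2) (Fin 2) ℂ →ₗ[ℂ] Matrix (Fin 2) (Fin 2) ℂ} (hΦ : IsQChannel Φ) :=
    isHermitian_heisenbergDual hΦ.2.isHermitian isHermitian_pauliZ
  have hSq {Φ : Matrix (Fin 2) (Fin 2) ℂ →ₗ[ℂ] Matrix (Fin 2) (Fin 2) ℂ} (hΦ : IsQChannel Φ) :=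
    hΦ.one_sub_heisenbergDual_mul_self posSemidef_one_sub_pauliZ posSemidef_one_add_pauliZ
  have hC := posSemidef_chsh_kronecker (hHerm hΦ₁₁) (hHerm hΦ₂₁) (hHerm hΦ₁₂) (hHerm hΦ₂₂)
    (hSq hΦ₁₁) (hSq hΦ₂₁) (hSq hΦ₁₂) (hSq hΦ₂₂)
  refine (hρ.re_trace_mul_le hC).trans_eq' ?_
  simp only [chshX, corr_eq_re_trace, Matrix.mul_add, Matrix.mul_sub, trace_add, trace_sub,
    Complex.add_re, Complex.sub_re]

end
end

section
/- Let |W⟩ = (|001⟩ + |010⟩ + |100⟩)/√3 ∈ ℂ² ⊗ ℂ² ⊗ ℂ² and ρ_W = Tr₃(|W⟩⟨W|). Then there is no density matrix σ indexed by Fin 2 × Fin 2 × Fin 2 × Fin 2 such that Tr₁₃ σ = ρ_W, Tr₁₄ σ = ρ_W, Tr₂₃ σ = ρ_W and Tr₂₄ σ = ρ_W. (Hence the bipartite biconditional state built from ρ_W and four identity channels is Bell nonlocal, even though ρ_W is not steerable by any pair of channels; steering is not necessary for Bell nonlocality of channels.) -/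
open Matrix BigOperators
open scoped ComplexOrder

noncomputable section

/-- Partial trace over the third factor of a tripartite matrix. -/
def ptrace3 {α β γ : Type*} [Fintype γ] (M : Matrix (α × β × γ) (α × β × γ) ℂ) :
    Matrix (α × β) (α × β) ℂ :=
  fun p q => ∑ c, M (p.1, p.2, c) (q.1, q.2, c)

/-- The W vector `(|001⟩ + |010⟩ + |100⟩)/√3`. -/
def wVec : Fin 2 × Fin 2 × Fin 2 → ℂ :=
  fun t => if t = (0, 0, 1) ∨ t = (0, 1, 0) ∨ t = (1, 0, 0)
    then (((Real.sqrt 3)⁻¹ : ℝ) : ℂ) else 0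

/-- The projector `|W⟩⟨W|` onto the W state. -/
def wProj : Matrix (Fin 2 × Fin 2 × Fin 2) (Fin 2 × Fin 2 × Fin 2) ℂ :=
  fun p q => wVec p * (starRingEnd ℂ) (wVec q)

/-- `ρ_W`, the two-qubit marginal of the W state. -/
def rhoW : Matrix (Fin 2 × Fin 2) (Fin 2 × Fin 2) ℂ := ptrace3 wProj

/-! If such a `σ` existed, the marginals `Tr₂₃ σ` and `Tr₁₄ σ` vanish at `|11⟩⟨11|`, so by
positivity every row and column of `σ` indexed by some `|1bc1⟩` or `|a11d⟩` vanishes. The entry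
`1/3` of `ρ_W` at `|01⟩⟨10|` then survives in `Tr₂₄ σ` and `Tr₁₃ σ` as a single entry of `σ`,
namely `σ(|0010⟩, |1000⟩) = σ(|0001⟩, |0100⟩) = 1/3`. Positivity on `|p⟩ - |q⟩` gives
`σ_pp + σ_qq ≥ 2/3` for both pairs; the four indices are distinct, so `tr σ ≥ 4/3 > 1`. -/

namespace Matrix.PosSemidef

section Ordered

variable {n R : Type*} [Ring R] [PartialOrder R] [StarRing R] [IsOrderedAddMonoid R]
  {M : Matrix n n R}

theorem diag_eq_zero_of_sum_sum_diag_eq_zero {α β : Type*} [Fintype α] [Fintype β]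
    (hM : M.PosSemidef) {f : α → β → n} (h : ∑ a, ∑ b, M (f a b) (f a b) = 0) (a : α) (b : β) :
    M (f a b) (f a b) = 0 := by
  have hrow := (Fintype.sum_eq_zero_iff_of_nonneg
    fun a ↦ Finset.sum_nonneg fun b _ ↦ hM.diag_nonneg).mp h
  exact congr_fun ((Fintype.sum_eq_zero_iff_of_nonneg fun _ ↦ hM.diag_nonneg).mp
    (congr_fun hrow a)) b

variable [Fintype n]

theorem sum_diag_le_trace (hM : M.PosSemidef) (s : Finset n) : ∑ i ∈ s, M i i ≤ M.trace :=
  Finset.sum_le_univ_sum_of_nonneg fun _ ↦ hM.diag_nonneg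

variable [DecidableEq n]

theorem apply_add_apply_le_diag_add (hM : M.PosSemidef) (i j : n) :
    M i j + M j i ≤ M i i + M j j := by
  have hx := hM.dotProduct_mulVec_nonneg (Pi.single i 1 - Pi.single j 1)
  simp only [star_sub, Pi.star_single, star_one, sub_dotProduct, mulVec_sub, dotProduct_sub,
    single_one_dotProduct, mulVec_single_one, col_apply] at hx
  rw [← sub_nonneg]
  convert hx using 1
  abel

theorem apply_add_apply_add_apply_add_apply_le_trace (hM : M.PosSemidef) {i j k l : n}
    (h : [i, j, k, l].Nodup) : M i j + M j i + (M k l + M l k) ≤ M.trace := by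
  have hdiag := hM.sum_diag_le_trace [i, j, k, l].toFinset
  rw [List.sum_toFinset _ h] at hdiag
  calc M i j + M j i + (M k l + M l k) ≤ M i i + M j j + (M k k + M l l) :=
        add_le_add (hM.apply_add_apply_le_diag_add i j) (hM.apply_add_apply_le_diag_add k l)
    _ ≤ M.trace := by simpa [add_assoc] using hdiag

end Ordered

variable {n 𝕜 : Type*} [Fintype n] [RCLike 𝕜] {M : Matrix n n 𝕜}

theorem apply_eq_zero_of_diag_eq_zero_right (hM : M.PosSemidef) {j : n} (hj : M j j = 0)
    (i : n) : M i j = 0 := by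
  classical
  have hq : star (Pi.single j 1) ⬝ᵥ M *ᵥ Pi.single j (1 : 𝕜) = 0 := by
    simpa [mulVec_single_one] using hj
  simpa [mulVec_single_one] using congr_fun ((hM.dotProduct_mulVec_zero_iff _).mp hq) i

theorem apply_eq_zero_of_diag_eq_zero_left (hM : M.PosSemidef) {i : n} (hi : M i i = 0)
    (j : n) : M i j = 0 := by
  rw [← hM.isHermitian.apply, hM.apply_eq_zero_of_diag_eq_zero_right hi, star_zero]

end Matrix.PosSemidef

theorem rhoW_one_one_one_one : rhoW (1, 1) (1, 1) = 0 := by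
  simp [rhoW, ptrace3, wProj, wVec]

theorem rhoW_zero_one_one_zero : rhoW (0, 1) (1, 0) = 1 / 3 := by
  simp [rhoW, ptrace3, wProj, wVec, Complex.conj_ofReal, ← mul_inv, ← Complex.ofReal_mul]

/-- there is no four-partite density matrix all four of whose relevant
bipartite marginals equal `ρ_W`; hence the biconditional state built from `ρ_W` and four
identity channels is Bell nonlocal, although `ρ_W` is not steerable by any pair of channels. -/
theorem rhoW_bell_nonlocal :
    ¬ ∃ σ : Matrix (Fin 2 × Fin 2 × Fin 2 × Fin 2) (Fin 2 × Fin 2 × Fin 2 × Fin 2) ℂ,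
      IsDensity σ ∧ tr13 σ = rhoW ∧ tr14 σ = rhoW ∧ tr23 σ = rhoW ∧ tr24 σ = rhoW := by
  rintro ⟨σ, ⟨hσ, htr⟩, h13, h14, h23, h24⟩
  have hz23 : ∀ b c, σ (1, b, c, 1) (1, b, c, 1) = 0 := hσ.diag_eq_zero_of_sum_sum_diag_eq_zero
    ((congr_fun₂ h23 (1, 1) (1, 1)).trans rhoW_one_one_one_one)
  have hz14 : ∀ a d, σ (a, 1, 1, d) (a, 1, 1, d) = 0 := hσ.diag_eq_zero_of_sum_sum_diag_eq_zero
    ((congr_fun₂ h14 (1, 1) (1, 1)).trans rhoW_one_one_one_one)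
  have hx : σ (0, 0, 1, 0) (1, 0, 0, 0) = 1 / 3 := by
    have h := (congr_fun₂ h24 (0, 1) (1, 0)).trans rhoW_zero_one_one_zero
    simp only [tr24, Fin.sum_univ_two] at h
    rwa [hσ.apply_eq_zero_of_diag_eq_zero_right (hz23 0 0),
      hσ.apply_eq_zero_of_diag_eq_zero_left (hz14 0 0),
      hσ.apply_eq_zero_of_diag_eq_zero_right (hz23 1 0), add_zero, add_zero, add_zero] at h
  have hy : σ (0, 0, 0, 1) (0, 1, 0, 0) = 1 / 3 := by
    have h := (congr_fun₂ h13 (0, 1) (1, 0)).trans rhoW_zero_one_one_zero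
    simp only [tr13, Fin.sum_univ_two] at h
    rwa [hσ.apply_eq_zero_of_diag_eq_zero_right (hz14 0 0),
      hσ.apply_eq_zero_of_diag_eq_zero_left (hz23 0 0),
      hσ.apply_eq_zero_of_diag_eq_zero_right (hz14 1 0), add_zero, zero_add, add_zero] at h
  have htrace := hσ.apply_add_apply_add_apply_add_apply_le_trace
    (i := (0, 0, 1, 0)) (j := (1, 0, 0, 0)) (k := (0, 0, 0, 1)) (l := (0, 1, 0, 0)) (by decide)
  rw [← hσ.isHermitian.apply (1, 0, 0, 0), hx, ← hσ.isHermitian.apply (0, 1, 0, 0), hy, htr]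
    at htrace
  norm_num [Complex.le_def] at htrace

end
end
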